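/- For every n ≥ 2: if a(n−1) mod 4 < a(n+1) mod 4 and a(n) mod 4 ≤ a(n+2) mod 4, then 4·S(n) = a(n)·a(n+1), where S(n) = Σ_{k=0}^{n} a(k). -/

import Mathlib

/-- Sum of base-`d` digits of `n`. -/
def sdig (d n : ℕ) : ℕ := (Nat.digits d n).sum

/-- `t_d(n)`: base-`d` digit sum of `n`, reduced mod `d`. -/
def td (d n : ℕ) : ℕ := sdig d n % d

/-- `a_{j,d}(n)`: n-th natural (0-indexed, increasing) with base-`d` digit sum ≡ j mod d. -/
noncomputable def agen (d j n : ℕ) : ℕ := Nat.nth (fun k => sdig d k % d = j) n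

/-- n-th odious number (binary digit sum odd), 0-indexed increasing. -/
noncomputable def odious (n : ℕ) : ℕ := Nat.nth (fun k => (Nat.digits 2 k).sum % 2 = 1) n

/-- n-th evil number (binary digit sum even), 0-indexed increasing. -/
noncomputable def evil (n : ℕ) : ℕ := Nat.nth (fun k => (Nat.digits 2 k).sum % 2 = 0) n

/-- Thue–Morse sequence: parity of the binary digit sum. -/
def tm (n : ℕ) : ℕ := (Nat.digits 2 n).sum % 2

/-! Writing `t` for the Thue–Morse sequence, `t (2k) = t k` and `t (2k+1) = 1 - t k`, so each pair
`{2k, 2k+1}` contains exactly one odious number; hence `a n = 2n + 1 - t n`. Consequently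
`a (2m) ≡ 1 - t m` and `a (2m+1) ≡ 2 + t m (mod 4)`. For odd `n` the two hypotheses on residues
contradict each other, and for even `n = 2m` the first one forces `t m = 1`, i.e.
`a (2m) = 4m` and `a (2m+1) = 4m + 3`. Pairing terms gives `S (2m-1) = 4m² - m`, and the identity
`4 (4m² + 3m) = 4m (4m + 3)` finishes the proof. -/

lemma tm_le_one (n : ℕ) : tm n ≤ 1 :=
  Nat.lt_succ_iff.mp (Nat.mod_lt _ two_pos)

lemma tm_two_mul (k : ℕ) : tm (2 * k) = tm k := by
  rcases Nat.eq_zero_or_pos k with rfl | hk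
  · rfl
  · rw [tm, Nat.digits_def' one_lt_two (by omega)]
    simp [tm]

lemma tm_two_mul_add_one (k : ℕ) : tm (2 * k + 1) = 1 - tm k := by
  have hk := tm_le_one k
  rw [tm, Nat.digits_def' one_lt_two (by omega), List.sum_cons,
    show (2 * k + 1) % 2 = 1 by omega, show (2 * k + 1) / 2 = k by omega]
  unfold tm at hk ⊢
  omega

lemma count_tm_eq_one_two_mul (m : ℕ) : Nat.count (fun k => tm k = 1) (2 * m) = m := by
  induction m with
  | zero => rfl
  | succ m ih =>
    rw [show 2 * (m + 1) = 2 * m + 1 + 1 by ring, Nat.count_succ, Nat.count_succ, ih,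
      tm_two_mul, tm_two_mul_add_one]
    have := tm_le_one m
    split_ifs <;> omega

lemma odious_eq (n : ℕ) : odious n = 2 * n + 1 - tm n := by
  have hcount := count_tm_eq_one_two_mul n
  rcases Nat.lt_or_eq_of_le (tm_le_one n) with h | h
  · have hodd : tm (2 * n + 1) = 1 := by rw [tm_two_mul_add_one]; omega
    have hev : ¬tm (2 * n) = 1 := by rw [tm_two_mul]; omega
    have hcount' : Nat.count (fun k => tm k = 1) (2 * n + 1) = n := by
      rw [Nat.count_succ, if_neg hev, hcount, add_zero]
    rw [show 2 * n + 1 - tm n = 2 * n + 1 by omega, odious]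
    nth_rw 1 [← hcount']
    exact Nat.nth_count (p := fun k => tm k = 1) hodd
  · have hev : tm (2 * n) = 1 := by rw [tm_two_mul, h]
    rw [h, Nat.add_sub_cancel, odious]
    nth_rw 1 [← hcount]
    exact Nat.nth_count (p := fun k => tm k = 1) hev

lemma odious_two_mul (m : ℕ) : odious (2 * m) = 4 * m + 1 - tm m := by
  rw [odious_eq, tm_two_mul]; ring_nf

lemma odious_two_mul_add_one (m : ℕ) : odious (2 * m + 1) = 4 * m + 2 + tm m := by
  have := tm_le_one m
  rw [odious_eq, tm_two_mul_add_one]; omega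

lemma odious_two_mul_mod_four (m : ℕ) : odious (2 * m) % 4 = 1 - tm m := by
  have := tm_le_one m
  rw [odious_two_mul]; omega

lemma odious_two_mul_add_one_mod_four (m : ℕ) : odious (2 * m + 1) % 4 = 2 + tm m := by
  have := tm_le_one m
  rw [odious_two_mul_add_one]; omega

lemma sum_range_two_mul_odious (m : ℕ) :
    ∑ k ∈ Finset.range (2 * m), odious k + m = 4 * m ^ 2 := by
  induction m with
  | zero => rfl
  | succ m ih =>
    have hpair : odious (2 * m) + odious (2 * m + 1) = 8 * m + 3 := by
      have := tm_le_one m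
      rw [odious_two_mul, odious_two_mul_add_one]
      omega
    rw [show 2 * (m + 1) = 2 * m + 1 + 1 by ring, Finset.sum_range_succ, Finset.sum_range_succ]
    linarith

lemma four_mul_sum_odious_of_tm_eq_one {m : ℕ} (h : tm m = 1) :
    4 * ∑ k ∈ Finset.range (2 * m + 1), odious k = odious (2 * m) * odious (2 * m + 1) := by
  have hsum := sum_range_two_mul_odious m
  rw [Finset.sum_range_succ, odious_two_mul, odious_two_mul_add_one, h]
  zify [show 1 ≤ 4 * m + 1 by omega] at hsum ⊢
  linear_combination 4 * hsum

theorem stmt17 (n : ℕ) (hn : 2 ≤ n)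
    (h1 : odious (n - 1) % 4 < odious (n + 1) % 4)
    (h2 : odious n % 4 ≤ odious (n + 2) % 4) :
    4 * ∑ k ∈ Finset.range (n + 1), odious k = odious n * odious (n + 1) := by
  obtain ⟨m, rfl | rfl⟩ := Nat.even_or_odd' n
  · obtain ⟨j, rfl⟩ : ∃ j, m = j + 1 := ⟨m - 1, by omega⟩
    apply four_mul_sum_odious_of_tm_eq_one
    rw [show 2 * (j + 1) - 1 = 2 * j + 1 by omega, odious_two_mul_add_one_mod_four,
      odious_two_mul_add_one_mod_four] at h1
    have := tm_le_one (j + 1)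
    omega
  · rw [Nat.add_sub_cancel, show 2 * m + 1 + 1 = 2 * (m + 1) by ring, odious_two_mul_mod_four,
      odious_two_mul_mod_four] at h1
    rw [show 2 * m + 1 + 2 = 2 * (m + 1) + 1 by ring, odious_two_mul_add_one_mod_four,
      odious_two_mul_add_one_mod_four] at h2
    have := tm_le_one m
    have := tm_le_one (m + 1)
    omega
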